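/- arXiv:2506.17197 — 3 statements merged into one kernel-verified Lean document; each statement's English description precedes it below -/
import Mathlib

section
/- Let X and Y be standard Borel spaces, let κ be a Markov kernel from X to Y, and let P be a probability measure on X × Y with first marginal P_X. Then for every probability measure π on X, KL(P ‖ P_X ⊗ κ) ≤ KL(P ‖ π ⊗ κ); that is, among all measures of the form π ⊗ κ with π a probability measure on X, the Kullback–Leibler divergence from P is minimised at π = P_X. -/
open MeasureTheory ProbabilityTheory Classical

open scoped ENNReal

/-- Kullback-Leibler divergence between two measures, valued in `[0, ∞]`:
`KL(μ‖ν) = ∫ log(dμ/dν) dμ` when `μ ≪ ν` and the log-likelihood ratio is `μ`-integrable,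
and `+∞` otherwise. -/

noncomputable def KL {α : Type*} [MeasurableSpace α] (μ ν : Measure α) : ℝ≥0∞ :=
  if μ ≪ ν ∧ Integrable (llr μ ν) μ then ENNReal.ofReal (∫ x, llr μ ν x ∂μ) else ∞

/-!
Disintegrate `P = P_X ⊗ P_{Y|X}`. The chain rule for the KL divergence gives
`KL(P ‖ π ⊗ κ) = KL(P_X ‖ π) + KL(P_X ⊗ P_{Y|X} ‖ P_X ⊗ κ)`, and the second term is
`KL(P ‖ P_X ⊗ κ)`; the first term is nonnegative.
-/

open InformationTheory

/-- Mathlib's `klDiv` adds the correction `ν univ - μ univ`, which vanishes for equal masses. -/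
lemma KL_eq_klDiv_of_measure_univ_eq {α : Type*} [MeasurableSpace α] {μ ν : Measure α}
    (h : μ Set.univ = ν Set.univ) : KL μ ν = klDiv μ ν := by
  rw [KL, klDiv_def, measureReal_def, measureReal_def, h, add_sub_cancel_right]

lemma klDiv_compProd_le_klDiv_compProd {X Y : Type*} [MeasurableSpace X] [MeasurableSpace Y]
    (μ ν : Measure X) [IsFiniteMeasure μ] [IsFiniteMeasure ν]
    (κ η : Kernel X Y) [IsMarkovKernel κ] [IsMarkovKernel η] :
    klDiv (μ ⊗ₘ κ) (μ ⊗ₘ η) ≤ klDiv (μ ⊗ₘ κ) (ν ⊗ₘ η) := by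
  rw [klDiv_compProd_eq_add μ ν κ η]
  exact le_add_self

theorem kl_compProd_fst_le_general {X Y : Type*} [MeasurableSpace X] [MeasurableSpace Y]
    [StandardBorelSpace Y]
    (κ : Kernel X Y) [IsMarkovKernel κ]
    (P : Measure (X × Y)) [IsProbabilityMeasure P]
    (π : Measure X) [IsProbabilityMeasure π] :
    KL P (P.fst ⊗ₘ κ) ≤ KL P (π ⊗ₘ κ) := by
  have : Nonempty Y := (nonempty_of_isProbabilityMeasure P).map Prod.snd
  rw [KL_eq_klDiv_of_measure_univ_eq (by simp), KL_eq_klDiv_of_measure_univ_eq (by simp)]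
  simpa only [P.disintegrate P.condKernel] using
    klDiv_compProd_le_klDiv_compProd P.fst π P.condKernel κ

/-- Among all measures of the form `π ⊗ₘ κ` with `π` a probability measure on `X`,
the KL divergence from `P` is minimised at the first marginal `π = P.fst`. -/
theorem kl_compProd_fst_le {X Y : Type*} [MeasurableSpace X] [MeasurableSpace Y]
    [StandardBorelSpace X] [StandardBorelSpace Y]
    (κ : Kernel X Y) [IsMarkovKernel κ]
    (P : Measure (X × Y)) [IsProbabilityMeasure P]
    (π : Measure X) [IsProbabilityMeasure π] :
    KL P (P.fst ⊗ₘ κ) ≤ KL P (π ⊗ₘ κ) :=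
  kl_compProd_fst_le_general κ P π
end

section
/- Let V be a finite set, S ⊆ V, and d ≥ 1. Let f_v : ℝ^d → [0,∞) for v ∈ V and h : (ℝ^d)^S → [0,∞) be measurable functions such that ∏_{v∈V} f_v(x_v) = h((x_i)_{i∈S}) for Lebesgue-almost every x ∈ (ℝ^d)^V, and suppose the set {x ∈ (ℝ^d)^V : ∏_{v∈V} f_v(x_v) > 0} has positive Lebesgue measure. Then for every j ∈ V \ S there exists a constant c_j ∈ (0,∞) such that f_j(y) = c_j for Lebesgue-almost every y ∈ ℝ^d. -/
open MeasureTheory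

/-!
Split off the coordinate `x_j` with `j ∉ S`: the identity becomes `f_j(y) · g(a) = H(a)` for
almost every pair `(a, y)`, where `a` collects the other coordinates. By Fubini, some fixed `a`
has this identity for almost every `y` while `f_j(y) · g(a) > 0` on a non-null set of `y`; so
`g(a) ≠ 0` and `f_j` is almost everywhere equal to its value at a point of that set, a positive
number.
-/

instance Subtype.uniqueNotNe {ι : Type*} (i : ι) : Unique {j // ¬j ≠ i} where
  default := ⟨i, not_not_intro rfl⟩
  uniq j := Subtype.ext (not_not.mp j.2)

namespace MeasurableEquiv

variable {ι : Type*} [DecidableEq ι] (X : ι → Type*) [∀ i, MeasurableSpace (X i)]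

/-- The measurable version of `Equiv.piSplitAt`, with the factors in the other order. -/
def piSplitAt (i : ι) : (∀ j, X j) ≃ᵐ (∀ j : {j // j ≠ i}, X j) × X i :=
  (piEquivPiSubtypeProd X (· ≠ i)).trans (prodCongr (refl _) (piUnique _))

end MeasurableEquiv

theorem measurePreserving_piSplitAt {ι : Type*} [Fintype ι] [DecidableEq ι] {X : ι → Type*}
    [∀ i, MeasurableSpace (X i)] (μ : ∀ i, Measure (X i)) [∀ i, SigmaFinite (μ i)] (i : ι) :
    MeasurePreserving (MeasurableEquiv.piSplitAt X i) (Measure.pi μ)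
      ((Measure.pi fun j : {j // j ≠ i} => μ j).prod (μ i)) :=
  (MeasurePreserving.id _ |>.prod (measurePreserving_piUnique fun j : {j // ¬j ≠ i} => μ j)).comp
    (measurePreserving_piEquivPiSubtypeProd μ (· ≠ i))

theorem exists_pos_ae_eq_const_of_mul_ae_eq {α β : Type*} [MeasurableSpace α]
    [MeasurableSpace β] {μ : Measure α} {ν : Measure β} [SFinite ν] {f : β → ℝ} {g H : α → ℝ}
    (hf_nonneg : ∀ y, 0 ≤ f y) (hf : Measurable f) (hg : Measurable g)
    (heq : ∀ᵐ z ∂μ.prod ν, f z.2 * g z.1 = H z.1)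
    (hpos : μ.prod ν {z | 0 < f z.2 * g z.1} ≠ 0) :
    ∃ c, 0 < c ∧ ∀ᵐ y ∂ν, f y = c := by
  have hA : MeasurableSet {z : α × β | 0 < f z.2 * g z.1} :=
    measurableSet_lt measurable_const ((hf.comp measurable_snd).mul (hg.comp measurable_fst))
  obtain ⟨a, ha_eq, ha_pos⟩ :
      ∃ a, (∀ᵐ y ∂ν, f y * g a = H a) ∧ ν {y | 0 < f y * g a} ≠ 0 := by
    by_contra! h
    exact hpos <| (Measure.measure_prod_null hA).2 <|
      (Measure.ae_ae_of_ae_prod heq).mono fun a ha => h a ha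
  obtain ⟨y₀, hy₀_pos, hy₀_eq⟩ :=
    ((frequently_ae_mem_iff.2 ha_pos).and_eventually ha_eq).exists
  have hga : g a ≠ 0 := right_ne_zero_of_mul hy₀_pos.ne'
  refine ⟨f y₀, (hf_nonneg y₀).lt_of_ne (left_ne_zero_of_mul hy₀_pos.ne').symm, ?_⟩
  filter_upwards [ha_eq] with y hy
  exact mul_right_cancel₀ hga (hy.trans hy₀_eq.symm)

theorem factor_ae_const_of_product_eq_subset_function_general
    {V : Type*} [Fintype V] [DecidableEq V] (S : Finset V) (d : ℕ)
    (f : V → (Fin d → ℝ) → ℝ)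
    (hf_nonneg : ∀ v y, 0 ≤ f v y)
    (hf_meas : ∀ v, Measurable (f v))
    (h : ({i // i ∈ S} → Fin d → ℝ) → ℝ)
    (heq : ∀ᵐ x : V → Fin d → ℝ, (∏ v, f v (x v)) = h (fun i => x i.1))
    (hpos : 0 < volume {x : V → Fin d → ℝ | 0 < ∏ v, f v (x v)}) :
    ∀ j ∈ Finset.univ \ S, ∃ c : ℝ, 0 < c ∧ ∀ᵐ y : Fin d → ℝ, f j y = c := by
  intro j hj
  have hjS : j ∉ S := (Finset.mem_sdiff.mp hj).2
  set e := MeasurableEquiv.piSplitAt (fun _ : V => Fin d → ℝ) j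
  have he : MeasurePreserving e volume (volume.prod volume) := measurePreserving_piSplitAt _ j
  set g : ({v // v ≠ j} → Fin d → ℝ) → ℝ := fun a => ∏ v, f v.1 (a v)
  have hg : Measurable g :=
    Finset.measurable_prod _ fun v _ => (hf_meas v.1).comp (measurable_pi_apply v)
  have hsplit : ∀ x : V → Fin d → ℝ, ∏ v, f v (x v) = f j (e x).2 * g (e x).1 :=
    fun x => Fintype.prod_eq_mul_prod_subtype_ne (fun v => f v (x v)) j
  refine exists_pos_ae_eq_const_of_mul_ae_eq (hf_nonneg j) (hf_meas j) hg
    (μ := volume) (H := fun a => h fun i => a ⟨i, ne_of_mem_of_not_mem i.2 hjS⟩) ?_ ?_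
  · rw [← he.map_eq, e.measurableEmbedding.ae_map_iff]
    filter_upwards [heq] with x hx
    rw [← hsplit, hx]
    rfl
  · rw [← he.measure_preimage_equiv]
    simpa only [Set.preimage_ofPred_eq, ← hsplit] using hpos.ne'

/-- If a product `∏_{v ∈ V} f v (x v)` of nonnegative single-coordinate factors agrees
Lebesgue-almost everywhere with a function `h` of the coordinates in `S` only, and the product
is positive on a set of positive Lebesgue measure, then for every vertex `j ∉ S` the factor
`f j` is Lebesgue-almost everywhere equal to a positive constant. -/
theorem factor_ae_const_of_product_eq_subset_function
    {V : Type*} [Fintype V] [DecidableEq V] (S : Finset V) (d : ℕ) (hd : 1 ≤ d)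
    (f : V → (Fin d → ℝ) → ℝ)
    (hf_nonneg : ∀ v y, 0 ≤ f v y)
    (hf_meas : ∀ v, Measurable (f v))
    (h : ({i // i ∈ S} → Fin d → ℝ) → ℝ)
    (hh_nonneg : ∀ z, 0 ≤ h z)
    (hh_meas : Measurable h)
    (heq : ∀ᵐ x : V → Fin d → ℝ, (∏ v, f v (x v)) = h (fun i => x i.1))
    (hpos : 0 < volume {x : V → Fin d → ℝ | 0 < ∏ v, f v (x v)}) :
    ∀ j ∈ Finset.univ \ S, ∃ c : ℝ, 0 < c ∧ ∀ᵐ y : Fin d → ℝ, f j y = c :=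
  factor_ae_const_of_product_eq_subset_function_general S d f hf_nonneg hf_meas h heq hpos
end

section
/- Let X, Z, Y be standard Borel spaces. Let q be a probability measure on Z and κ_X, κ_Y Markov kernels from Z to X and from Z to Y, and let Q be the probability measure on X × Z × Y which is the law of (ξ, ζ, η) where ζ ∼ q and, given ζ, the coordinates ξ ∼ κ_X(ζ) and η ∼ κ_Y(ζ) are conditionally independent. Let μ be a probability measure on Z and ρ_X, ρ_Y Markov kernels from Z to X and from Z to Y, and let C be the set of probability measures P on X × Z × Y whose Z-marginal equals μ and whose regular conditional distribution of the X-coordinate given the Z-coordinate equals ρ_X and of the Y-coordinate given the Z-coordinate equals ρ_Y, μ-almost everywhere. Let P* ∈ C be the conditionally independent element of C (the law of (ξ, ζ, η) with ζ ∼ μ and, given ζ, ξ ∼ ρ_X(ζ) and η ∼ ρ_Y(ζ) independent). Then KL(P* ‖ Q) ≤ KL(P ‖ Q) for every P ∈ C, and if KL(P* ‖ Q) < ∞ then P* is the unique minimiser: KL(P ‖ Q) = KL(P* ‖ Q) with P ∈ C implies P = P*. -/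
open MeasureTheory ProbabilityTheory Classical

open scoped ENNReal

/-- The joint law on `X × Z × Y` of `(ξ, ζ, η)` where `ζ ∼ m` and, given `ζ`, the coordinates
`ξ ∼ κX(ζ)` and `η ∼ κY(ζ)` are conditionally independent. -/
noncomputable def condIndepLaw {X Z Y : Type*}
    [MeasurableSpace X] [MeasurableSpace Z] [MeasurableSpace Y]
    (m : Measure Z) (κX : Kernel Z X) (κY : Kernel Z Y) : Measure (X × Z × Y) :=
  (m ⊗ₘ (κX ×ₖ κY)).map (fun p => (p.2.1, p.1, p.2.2))

/-!
Write `Q` and `P*` for the conditionally independent laws built from `(q, κX, κY)` and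
`(μ, ρX, ρY)`. Everything follows from the Pythagorean identity
`KL(P‖Q) = KL(P*‖Q) + KL(P‖P*)` for `P ∈ C`, because `KL(P‖P*) ≥ 0` with equality only at
`P = P*`. The identity comes from the chain rule `KL(ρ‖ν ⊗ η) = KL(ρ₁‖ν) + KL(ρ‖ρ₁ ⊗ η)`
(`ρ₁` the first marginal of `ρ`), applied twice. Disintegrating along `(Z, X)` replaces
`(q, κX)` by `(μ, ρX)` in the reference law at the cost `KL(μ ⊗ ρX‖q ⊗ κX)`, which is the same
for `P` and for `P*` since they share their `(Z, X)`-marginal; disintegrating along `(Z, Y)`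
then replaces `κY` by `ρY`, at a cost shared in the same way, and turns the reference law
into `P*`.
-/

open InformationTheory

section KL

variable {α β : Type*} [MeasurableSpace α] [MeasurableSpace β]

lemma KL_eq_klDiv {μ ν : Measure α} [IsProbabilityMeasure μ] [IsProbabilityMeasure ν] :
    KL μ ν = klDiv μ ν := by
  rw [KL, klDiv_def]
  simp [measureReal_def]

lemma klDiv_map_measurableEquiv (e : α ≃ᵐ β) (μ ν : Measure α) [IsFiniteMeasure μ]
    [IsFiniteMeasure ν] : klDiv (μ.map e) (ν.map e) = klDiv μ ν := by
  refine le_antisymm (klDiv_map_le μ ν e.measurable) ?_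
  calc klDiv μ ν = klDiv ((μ.map e).map e.symm) ((ν.map e).map e.symm) := by
        rw [MeasurableEquiv.map_symm_map, MeasurableEquiv.map_symm_map]
    _ ≤ klDiv (μ.map e) (ν.map e) := klDiv_map_le _ _ e.symm.measurable

lemma klDiv_eq_klDiv_fst_add [StandardBorelSpace β] [Nonempty β] (ρ : Measure (α × β))
    [IsFiniteMeasure ρ] (ν : Measure α) [IsFiniteMeasure ν] (η : Kernel α β) [IsMarkovKernel η] :
    klDiv ρ (ν ⊗ₘ η) = klDiv ρ.fst ν + klDiv ρ (ρ.fst ⊗ₘ η) := by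
  simpa only [ρ.disintegrate ρ.condKernel] using klDiv_compProd_eq_add ρ.fst ν ρ.condKernel η

end KL

lemma ProbabilityTheory.Kernel.compProd_prodMkRight_eq_prod {Z X Y : Type*} [MeasurableSpace Z]
    [MeasurableSpace X] [MeasurableSpace Y] (κ : Kernel Z X) (η : Kernel Z Y)
    [IsSFiniteKernel κ] [IsSFiniteKernel η] :
    κ ⊗ₖ η.prodMkRight X = κ ×ₖ η := by
  ext z s hs
  rw [Kernel.compProd_apply hs, Kernel.prod_apply, Measure.prod_apply hs]
  rfl

section Coordinates

variable {X Z Y : Type*} [MeasurableSpace X] [MeasurableSpace Z] [MeasurableSpace Y]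

def regroupZX : (X × Z × Y) ≃ᵐ ((Z × X) × Y) where
  toFun p := ((p.2.1, p.1), p.2.2)
  invFun w := (w.1.2, w.1.1, w.2)
  left_inv _ := rfl
  right_inv _ := rfl
  measurable_toFun := by simp only [Equiv.coe_fn_mk]; fun_prop
  measurable_invFun := by simp only [Equiv.coe_fn_symm_mk]; fun_prop

def swapXY : (X × Z × Y) ≃ᵐ (Y × Z × X) where
  toFun p := (p.2.2, p.2.1, p.1)
  invFun p := (p.2.2, p.2.1, p.1)
  left_inv _ := rfl
  right_inv _ := rfl
  measurable_toFun := by simp only [Equiv.coe_fn_mk]; fun_prop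
  measurable_invFun := by simp only [Equiv.coe_fn_symm_mk]; fun_prop

lemma fst_map_regroupZX (P : Measure (X × Z × Y)) :
    (P.map regroupZX).fst = P.map (fun p => (p.2.1, p.1)) := by
  rw [Measure.fst, Measure.map_map measurable_fst regroupZX.measurable]
  rfl

lemma map_swapXY_map (P : Measure (X × Z × Y)) :
    (P.map swapXY).map (fun p => (p.2.1, p.1)) = P.map (fun p => (p.2.1, p.2.2)) := by
  rw [Measure.map_map (by fun_prop) swapXY.measurable]
  rfl

variable (m : Measure Z) (κ : Kernel Z X) (η : Kernel Z Y)
  [IsSFiniteKernel κ] [IsSFiniteKernel η]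

lemma condIndepLaw_map_regroupZX :
    (condIndepLaw m κ η).map regroupZX = m ⊗ₘ κ ⊗ₘ η.prodMkRight X := by
  rw [condIndepLaw, Measure.map_map regroupZX.measurable (by fun_prop),
    ← Kernel.compProd_prodMkRight_eq_prod, ← Measure.compProd_assoc]
  rfl

lemma condIndepLaw_map_swapXY [SFinite m] :
    (condIndepLaw m κ η).map swapXY = condIndepLaw m η κ := by
  rw [condIndepLaw, condIndepLaw, Measure.map_map swapXY.measurable (by fun_prop),
    ← Kernel.prodComm_prod, Measure.compProd_map MeasurableEquiv.prodComm.measurable,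
    Measure.map_map (by fun_prop) (by fun_prop)]
  rfl

end Coordinates

section CondIndepLaw

variable {X Z Y : Type*} [MeasurableSpace X] [MeasurableSpace Z] [MeasurableSpace Y]

instance (m : Measure Z) (κ : Kernel Z X) (η : Kernel Z Y) [IsFiniteMeasure m]
    [IsFiniteKernel κ] [IsFiniteKernel η] : IsFiniteMeasure (condIndepLaw m κ η) := by
  rw [condIndepLaw]; infer_instance

instance (m : Measure Z) (κ : Kernel Z X) (η : Kernel Z Y) [IsProbabilityMeasure m]
    [IsMarkovKernel κ] [IsMarkovKernel η] : IsProbabilityMeasure (condIndepLaw m κ η) := by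
  rw [condIndepLaw]; exact Measure.isProbabilityMeasure_map (by fun_prop)

lemma condIndepLaw_map_zx (m : Measure Z) [SFinite m] (κ : Kernel Z X) (η : Kernel Z Y)
    [IsSFiniteKernel κ] [IsMarkovKernel η] :
    (condIndepLaw m κ η).map (fun p => (p.2.1, p.1)) = m ⊗ₘ κ := by
  rw [← fst_map_regroupZX, condIndepLaw_map_regroupZX, Measure.fst_compProd]

lemma condIndepLaw_map_zy (m : Measure Z) [SFinite m] (κ : Kernel Z X) (η : Kernel Z Y)
    [IsMarkovKernel κ] [IsSFiniteKernel η] :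
    (condIndepLaw m κ η).map (fun p => (p.2.1, p.2.2)) = m ⊗ₘ η := by
  rw [← map_swapXY_map, condIndepLaw_map_swapXY, condIndepLaw_map_zx]

variable (R : Measure (X × Z × Y)) [IsFiniteMeasure R] (m : Measure Z) [IsFiniteMeasure m]
  (κ : Kernel Z X) (η : Kernel Z Y) [IsMarkovKernel κ] [IsMarkovKernel η]
  (m' : Measure Z) [IsFiniteMeasure m']

lemma klDiv_condIndepLaw_eq_add_left [StandardBorelSpace Y] [Nonempty Y]
    (κ' : Kernel Z X) [IsMarkovKernel κ'] (hR : R.map (fun p => (p.2.1, p.1)) = m' ⊗ₘ κ') :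
    klDiv R (condIndepLaw m κ η) =
      klDiv (m' ⊗ₘ κ') (m ⊗ₘ κ) + klDiv R (condIndepLaw m' κ' η) := by
  rw [← klDiv_map_measurableEquiv regroupZX R (condIndepLaw m κ η),
    ← klDiv_map_measurableEquiv regroupZX R (condIndepLaw m' κ' η),
    condIndepLaw_map_regroupZX, condIndepLaw_map_regroupZX, ← hR, ← fst_map_regroupZX]
  exact klDiv_eq_klDiv_fst_add _ _ _

lemma klDiv_condIndepLaw_eq_add_right [StandardBorelSpace X] [Nonempty X]
    (η' : Kernel Z Y) [IsMarkovKernel η'] (hR : R.map (fun p => (p.2.1, p.2.2)) = m' ⊗ₘ η') :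
    klDiv R (condIndepLaw m κ η) =
      klDiv (m' ⊗ₘ η') (m ⊗ₘ η) + klDiv R (condIndepLaw m' κ η') := by
  rw [← klDiv_map_measurableEquiv swapXY R (condIndepLaw m κ η),
    ← klDiv_map_measurableEquiv swapXY R (condIndepLaw m' κ η'),
    condIndepLaw_map_swapXY, condIndepLaw_map_swapXY]
  exact klDiv_condIndepLaw_eq_add_left _ _ _ _ _ _ (by rw [map_swapXY_map, hR])

end CondIndepLaw

theorem klDiv_eq_klDiv_condIndepLaw_add {X Z Y : Type*} [MeasurableSpace X] [MeasurableSpace Z]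
    [MeasurableSpace Y] [StandardBorelSpace X] [Nonempty X] [StandardBorelSpace Y] [Nonempty Y]
    (q : Measure Z) [IsFiniteMeasure q] (κX : Kernel Z X) (κY : Kernel Z Y)
    [IsMarkovKernel κX] [IsMarkovKernel κY] (μ : Measure Z) [IsFiniteMeasure μ]
    (ρX : Kernel Z X) (ρY : Kernel Z Y) [IsMarkovKernel ρX] [IsMarkovKernel ρY]
    (P : Measure (X × Z × Y)) [IsFiniteMeasure P]
    (hX : P.map (fun p => (p.2.1, p.1)) = μ ⊗ₘ ρX)
    (hY : P.map (fun p => (p.2.1, p.2.2)) = μ ⊗ₘ ρY) :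
    klDiv P (condIndepLaw q κX κY) = klDiv (condIndepLaw μ ρX ρY) (condIndepLaw q κX κY)
      + klDiv P (condIndepLaw μ ρX ρY) := by
  rw [klDiv_condIndepLaw_eq_add_left P q κX κY μ ρX hX,
    klDiv_condIndepLaw_eq_add_left _ q κX κY μ ρX (condIndepLaw_map_zx μ ρX ρY),
    klDiv_condIndepLaw_eq_add_right P μ ρX κY μ ρY hY,
    klDiv_condIndepLaw_eq_add_right _ μ ρX κY μ ρY (condIndepLaw_map_zy μ ρX ρY),
    klDiv_self, add_zero, add_assoc]

theorem condIndep_minimises_kl_general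
    {X Z Y : Type*} [MeasurableSpace X] [MeasurableSpace Z] [MeasurableSpace Y]
    [StandardBorelSpace X] [StandardBorelSpace Y]
    (q : Measure Z) [IsProbabilityMeasure q]
    (κX : Kernel Z X) (κY : Kernel Z Y) [IsMarkovKernel κX] [IsMarkovKernel κY]
    (μ : Measure Z) [IsProbabilityMeasure μ]
    (ρX : Kernel Z X) (ρY : Kernel Z Y) [IsMarkovKernel ρX] [IsMarkovKernel ρY]
    (C : Set (Measure (X × Z × Y)))
    (hC : C = {P : Measure (X × Z × Y) | IsProbabilityMeasure P ∧
      P.map (fun p => p.2.1) = μ ∧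
      P.map (fun p => (p.2.1, p.1)) = μ ⊗ₘ ρX ∧
      P.map (fun p => (p.2.1, p.2.2)) = μ ⊗ₘ ρY}) :
    (∀ P ∈ C, KL (condIndepLaw μ ρX ρY) (condIndepLaw q κX κY) ≤
        KL P (condIndepLaw q κX κY)) ∧
      (KL (condIndepLaw μ ρX ρY) (condIndepLaw q κX κY) < ∞ →
        ∀ P ∈ C, KL P (condIndepLaw q κX κY) = KL (condIndepLaw μ ρX ρY) (condIndepLaw q κX κY) →
          P = condIndepLaw μ ρX ρY) := by
  have pythagoras : ∀ P ∈ C, KL P (condIndepLaw q κX κY) =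
      KL (condIndepLaw μ ρX ρY) (condIndepLaw q κX κY) + KL P (condIndepLaw μ ρX ρY) := by
    intro P hP
    obtain ⟨_, -, hX, hY⟩ := hC ▸ hP
    obtain ⟨x, -, y⟩ := nonempty_of_isProbabilityMeasure P
    have : Nonempty X := ⟨x⟩
    have : Nonempty Y := ⟨y⟩
    simp only [KL_eq_klDiv]
    exact klDiv_eq_klDiv_condIndepLaw_add q κX κY μ ρX ρY P hX hY
  refine ⟨fun P hP => pythagoras P hP ▸ le_self_add, fun hfin P hP heq => ?_⟩
  have : IsProbabilityMeasure P := (hC ▸ hP).1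
  have hzero : KL P (condIndepLaw μ ρX ρY) = 0 :=
    (ENNReal.add_right_inj hfin.ne).mp (by rw [← pythagoras P hP, heq, add_zero])
  rwa [KL_eq_klDiv, klDiv_eq_zero_iff] at hzero

/-- **Conditional independence minimises KL against a conditionally independent reference.**
Let `Q` be the conditionally independent law built from `q`, `κX`, `κY`, and let `C` be the
set of probability measures on `X × Z × Y` with `Z`-marginal `μ` whose conditional laws of the
`X`- and `Y`-coordinates given the `Z`-coordinate are `ρX` and `ρY` (`μ`-a.e.), i.e. whose
`(Z, X)`-marginal is `μ ⊗ₘ ρX` and whose `(Z, Y)`-marginal is `μ ⊗ₘ ρY`.  Then the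
conditionally independent element `P* = condIndepLaw μ ρX ρY` of `C` satisfies
`KL(P* ‖ Q) ≤ KL(P ‖ Q)` for all `P ∈ C`, and is the unique minimiser when `KL(P* ‖ Q) < ∞`. -/
theorem condIndep_minimises_kl
    {X Z Y : Type*} [MeasurableSpace X] [MeasurableSpace Z] [MeasurableSpace Y]
    [StandardBorelSpace X] [StandardBorelSpace Z] [StandardBorelSpace Y]
    (q : Measure Z) [IsProbabilityMeasure q]
    (κX : Kernel Z X) (κY : Kernel Z Y) [IsMarkovKernel κX] [IsMarkovKernel κY]
    (μ : Measure Z) [IsProbabilityMeasure μ]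
    (ρX : Kernel Z X) (ρY : Kernel Z Y) [IsMarkovKernel ρX] [IsMarkovKernel ρY]
    (C : Set (Measure (X × Z × Y)))
    (hC : C = {P : Measure (X × Z × Y) | IsProbabilityMeasure P ∧
      P.map (fun p => p.2.1) = μ ∧
      P.map (fun p => (p.2.1, p.1)) = μ ⊗ₘ ρX ∧
      P.map (fun p => (p.2.1, p.2.2)) = μ ⊗ₘ ρY}) :
    (∀ P ∈ C, KL (condIndepLaw μ ρX ρY) (condIndepLaw q κX κY) ≤
        KL P (condIndepLaw q κX κY)) ∧
      (KL (condIndepLaw μ ρX ρY) (condIndepLaw q κX κY) < ∞ →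
        ∀ P ∈ C, KL P (condIndepLaw q κX κY) = KL (condIndepLaw μ ρX ρY) (condIndepLaw q κX κY) →
          P = condIndepLaw μ ρX ρY) :=
  condIndep_minimises_kl_general q κX κY μ ρX ρY C hC
end
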